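/- Let pa, ε1, ε2, ε3 be random variables on a probability space taking values in finite sets, define Y = g1(pa, ε1), nd = g2(pa, ε2), dc = g3(Y, ε3) for arbitrary functions g1, g2, g3, where ε1 is independent of pa, ε2 is independent of the pair (pa, ε1), and ε3 is independent of the triple (pa, ε1, ε2). Let X = h(pa, nd, dc) for an injective function h, and let Z = φ(X) for any function φ. Then for every real λ ≥ 0, I(Z; (Y, nd)) − λ·I(Z; (nd, dc)) ≥ I(Z; Y) − λ·I(Z; X). -/

import Mathlib

open Finset

/-- Probability of the event `U = u` under the weight function `μ`
on a finite sample space. -/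
noncomputable def probOf {Ω α : Type} [Fintype Ω] [DecidableEq α]
    (μ : Ω → ℝ) (U : Ω → α) (u : α) : ℝ :=
  ∑ ω, if U ω = u then μ ω else 0

/-- Shannon entropy (natural logarithm) of the random variable `U`
under the weight function `μ`. -/
noncomputable def entropy {Ω α : Type} [Fintype Ω] [Fintype α] [DecidableEq α]
    (μ : Ω → ℝ) (U : Ω → α) : ℝ :=
  -∑ u, probOf μ U u * Real.log (probOf μ U u)

/-- Mutual information `I(U;V) = H(U) + H(V) - H(U,V)`. -/
noncomputable def mutualInfo {Ω α β : Type} [Fintype Ω] [Fintype α] [Fintype β]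
    [DecidableEq α] [DecidableEq β] (μ : Ω → ℝ) (U : Ω → α) (V : Ω → β) : ℝ :=
  entropy μ U + entropy μ V - entropy μ (fun ω => (U ω, V ω))

/-- The conditional weight function given the event `W = w`. -/
noncomputable def condWeight {Ω γ : Type} [Fintype Ω] [DecidableEq γ]
    (μ : Ω → ℝ) (W : Ω → γ) (w : γ) : Ω → ℝ :=
  fun ω => if W ω = w then μ ω / probOf μ W w else 0

/-- Conditional mutual information
`I(U;V|W) = ∑ w, P(W = w) * I(U;V | W = w)`. -/
noncomputable def condMutualInfo {Ω α β γ : Type} [Fintype Ω]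
    [Fintype α] [Fintype β] [Fintype γ]
    [DecidableEq α] [DecidableEq β] [DecidableEq γ]
    (μ : Ω → ℝ) (U : Ω → α) (V : Ω → β) (W : Ω → γ) : ℝ :=
  ∑ w, probOf μ W w * mutualInfo (condWeight μ W w) U V

/-- `μ` is a probability weight function on the finite sample space. -/
def IsProb {Ω : Type} [Fintype Ω] (μ : Ω → ℝ) : Prop :=
  (∀ ω, 0 ≤ μ ω) ∧ ∑ ω, μ ω = 1

/-- Independence of two finite-valued random variables. -/
def IndepRV {Ω α β : Type} [Fintype Ω] [DecidableEq α] [DecidableEq β]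
    (μ : Ω → ℝ) (U : Ω → α) (V : Ω → β) : Prop :=
  ∀ u v, probOf μ (fun ω => (U ω, V ω)) (u, v) = probOf μ U u * probOf μ V v

/-!
Two information inequalities suffice. Refining `Y` to `(Y, nd)` can only increase the information
about `Z`; this is submodularity of entropy, which follows from Gibbs' inequality `log x ≤ x - 1`
applied to the likelihood ratio `p(u,v) p(v,w) / (p(u,v,w) p(v))`. And since `Z` is a function of
`X`, `I(Z; X) = H(Z)`, which bounds `I(Z; W)` for every `W`, in particular `W = (nd, dc)`.
Multiplying the second inequality by `λ ≥ 0` and adding the first gives the claim.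
-/

open Real

variable {Ω α β γ : Type} [Fintype Ω] [DecidableEq α] [DecidableEq β] [DecidableEq γ]
  {μ : Ω → ℝ}

section ProbOf

lemma probOf_nonneg (hμ : ∀ ω, 0 ≤ μ ω) (U : Ω → α) (u : α) : 0 ≤ probOf μ U u :=
  sum_nonneg fun ω _ => by split_ifs <;> simp [hμ ω]

lemma sum_probOf_mul [Fintype α] (μ : Ω → ℝ) (U : Ω → α) (g : α → ℝ) :
    ∑ u, probOf μ U u * g u = ∑ ω, μ ω * g (U ω) := by
  simp only [probOf, sum_mul, ite_mul, zero_mul]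
  rw [sum_comm]
  simp

lemma sum_probOf [Fintype α] (μ : Ω → ℝ) (U : Ω → α) : ∑ u, probOf μ U u = ∑ ω, μ ω := by
  simpa using sum_probOf_mul μ U (fun _ => 1)

lemma sum_probOf_pair_left [Fintype α] (μ : Ω → ℝ) (U : Ω → α) (V : Ω → β) (v : β) :
    ∑ u, probOf μ (fun ω => (U ω, V ω)) (u, v) = probOf μ V v := by
  simp only [probOf]
  rw [sum_comm]
  refine sum_congr rfl fun ω _ => ?_
  simp [Prod.ext_iff, ite_and]

lemma sum_probOf_pair_right [Fintype β] (μ : Ω → ℝ) (U : Ω → α) (V : Ω → β) (u : α) :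
    ∑ v, probOf μ (fun ω => (U ω, V ω)) (u, v) = probOf μ U u := by
  simp only [probOf]
  rw [sum_comm]
  refine sum_congr rfl fun ω _ => ?_
  simp [Prod.ext_iff, ite_and]

lemma probOf_apply_pos (hμ : ∀ ω, 0 ≤ μ ω) (U : Ω → α) {ω : Ω} (hω : 0 < μ ω) :
    0 < probOf μ U (U ω) :=
  hω.trans_le <| by
    simpa [probOf] using single_le_sum (f := fun ω' => if U ω' = U ω then μ ω' else 0)
      (fun ω' _ => by split_ifs <;> simp [hμ ω']) (mem_univ ω)

lemma probOf_le_probOf_comp (hμ : ∀ ω, 0 ≤ μ ω) (U : Ω → α) (f : α → β) (u : α) :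
    probOf μ U u ≤ probOf μ (fun ω => f (U ω)) (f u) :=
  sum_le_sum fun ω _ => by
    by_cases h : U ω = u
    · simp [h]
    · simp only [h, if_false]; split_ifs <;> simp [hμ ω]

lemma probOf_comp_of_injective (μ : Ω → ℝ) (U : Ω → α) {f : α → β}
    (hf : Function.Injective f) (u : α) :
    probOf μ (fun ω => f (U ω)) (f u) = probOf μ U u := by
  simp only [probOf, hf.eq_iff]

end ProbOf

section Entropy

variable [Fintype α] [Fintype β] [Fintype γ]

lemma entropy_eq_neg_sum (μ : Ω → ℝ) (U : Ω → α) :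
    entropy μ U = -∑ ω, μ ω * log (probOf μ U (U ω)) := by
  rw [entropy, sum_probOf_mul μ U (fun u => log (probOf μ U u))]

lemma entropy_comp_le (hμ : ∀ ω, 0 ≤ μ ω) (U : Ω → α) (f : α → β) :
    entropy μ (fun ω => f (U ω)) ≤ entropy μ U := by
  rw [entropy_eq_neg_sum, entropy_eq_neg_sum, neg_le_neg_iff]
  refine sum_le_sum fun ω _ => ?_
  rcases (hμ ω).eq_or_lt with h | h
  · simp [← h]
  · exact mul_le_mul_of_nonneg_left
      (log_le_log (probOf_apply_pos hμ U h) (probOf_le_probOf_comp hμ U f _)) h.le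

lemma entropy_comp_of_injective (μ : Ω → ℝ) (U : Ω → α) {f : α → β}
    (hf : Function.Injective f) : entropy μ (fun ω => f (U ω)) = entropy μ U := by
  simp only [entropy_eq_neg_sum, probOf_comp_of_injective μ U hf]

lemma mutualInfo_le_entropy_left (hμ : ∀ ω, 0 ≤ μ ω) (U : Ω → α) (V : Ω → β) :
    mutualInfo μ U V ≤ entropy μ U := by
  have := entropy_comp_le hμ (fun ω => (U ω, V ω)) Prod.snd
  rw [mutualInfo]
  linarith

lemma mutualInfo_comp_left_self (μ : Ω → ℝ) (X : Ω → α) (φ : α → β) :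
    mutualInfo μ (fun ω => φ (X ω)) X = entropy μ (fun ω => φ (X ω)) := by
  have hinj : Function.Injective fun x => (φ x, x) := fun _ _ h => congrArg Prod.snd h
  rw [mutualInfo, entropy_comp_of_injective μ X hinj]
  ring

lemma sum_mul_log_le_sum_mul_sub (hμ : ∀ ω, 0 ≤ μ ω) (r : Ω → ℝ)
    (hr : ∀ ω, 0 < μ ω → 0 < r ω) :
    ∑ ω, μ ω * log (r ω) ≤ ∑ ω, μ ω * r ω - ∑ ω, μ ω := by
  rw [← sum_sub_distrib]
  refine sum_le_sum fun ω _ => ?_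
  rcases (hμ ω).eq_or_lt with h | h
  · simp [← h]
  · nlinarith [log_le_sub_one_of_pos (hr ω h)]

lemma sum_probOf_pair_mul_probOf_pair_div (μ : Ω → ℝ) (U : Ω → α) (V : Ω → β) (W : Ω → γ) :
    ∑ t : α × β × γ, probOf μ (fun ω => (U ω, V ω)) (t.1, t.2.1) *
      probOf μ (fun ω => (V ω, W ω)) (t.2.1, t.2.2) / probOf μ V t.2.1 = ∑ ω, μ ω := by
  simp only [Fintype.sum_prod_type]
  rw [sum_comm, ← sum_probOf μ V]
  refine sum_congr rfl fun v _ => ?_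
  simp_rw [mul_div_right_comm _ (probOf μ (fun ω => (V ω, W ω)) _), ← mul_sum, ← sum_mul,
    ← sum_div, sum_probOf_pair_right, sum_probOf_pair_left]
  rcases eq_or_ne (probOf μ V v) 0 with h | h
  · simp [h]
  · field_simp

lemma entropy_submodular (hμ : ∀ ω, 0 ≤ μ ω) (U : Ω → α) (V : Ω → β) (W : Ω → γ) :
    entropy μ V + entropy μ (fun ω => (U ω, V ω, W ω)) ≤
      entropy μ (fun ω => (U ω, V ω)) + entropy μ (fun ω => (V ω, W ω)) := by
  set T : Ω → α × β × γ := fun ω => (U ω, V ω, W ω)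
  set Q := probOf μ T
  set A := probOf μ (fun ω => (U ω, V ω))
  set B := probOf μ (fun ω => (V ω, W ω))
  set C := probOf μ V
  -- Gibbs' inequality for the ratio `g = p(u,v) p(v,w) / (p(u,v,w) p(v))`, whose mean is `≤ 1`.
  set g : α × β × γ → ℝ := fun t => A (t.1, t.2.1) * B (t.2.1, t.2.2) / (Q t * C t.2.1)
  have hg : ∀ ω, 0 < μ ω → 0 < g (T ω) ∧ log (g (T ω)) =
      log (A (U ω, V ω)) + log (B (V ω, W ω)) - log (Q (T ω)) - log (C (V ω)) := by
    intro ω hω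
    have hA := probOf_apply_pos hμ (fun ω => (U ω, V ω)) hω
    have hB := probOf_apply_pos hμ (fun ω => (V ω, W ω)) hω
    have hQ := probOf_apply_pos hμ T hω
    have hC := probOf_apply_pos hμ V hω
    refine ⟨by positivity, ?_⟩
    rw [log_div (by positivity) (by positivity), log_mul hA.ne' hB.ne', log_mul hQ.ne' hC.ne']
    ring
  have hgibbs := sum_mul_log_le_sum_mul_sub hμ (fun ω => g (T ω)) fun ω hω => (hg ω hω).1
  have hmass : ∑ ω, μ ω * g (T ω) ≤ ∑ ω, μ ω := by
    rw [← sum_probOf_mul μ T g, ← sum_probOf_pair_mul_probOf_pair_div μ U V W]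
    refine sum_le_sum fun t _ => ?_
    change Q t * g t ≤ A (t.1, t.2.1) * B (t.2.1, t.2.2) / C t.2.1
    rcases eq_or_ne (Q t) 0 with h | h
    · rw [h, zero_mul]
      have := probOf_nonneg hμ (fun ω => (U ω, V ω)) (t.1, t.2.1)
      have := probOf_nonneg hμ (fun ω => (V ω, W ω)) (t.2.1, t.2.2)
      have := probOf_nonneg hμ V t.2.1
      positivity
    · rw [mul_div_assoc', mul_div_mul_left _ _ h]
  have hsplit : ∑ ω, μ ω * log (g (T ω)) = ∑ ω, μ ω * log (A (U ω, V ω)) +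
      ∑ ω, μ ω * log (B (V ω, W ω)) - ∑ ω, μ ω * log (Q (T ω)) -
      ∑ ω, μ ω * log (C (V ω)) := by
    simp only [← sum_add_distrib, ← sum_sub_distrib]
    refine sum_congr rfl fun ω _ => ?_
    rcases (hμ ω).eq_or_lt with h | h
    · simp [← h]
    · rw [(hg ω h).2]; ring
  simp only [entropy_eq_neg_sum]
  linarith

lemma mutualInfo_le_mutualInfo_pair (hμ : ∀ ω, 0 ≤ μ ω) (U : Ω → α) (V : Ω → β) (W : Ω → γ) :
    mutualInfo μ U V ≤ mutualInfo μ U (fun ω => (V ω, W ω)) := by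
  have := entropy_submodular hμ U V W
  simp only [mutualInfo]
  linarith

end Entropy

theorem stmt_6_general {Ω YT NDT DCT XT ZT : Type}
    [Fintype Ω]
    [Fintype YT] [Fintype NDT] [Fintype DCT] [Fintype XT] [Fintype ZT]
    [DecidableEq YT] [DecidableEq NDT] [DecidableEq DCT]
    [DecidableEq XT] [DecidableEq ZT]
    (μ : Ω → ℝ) (hμ : IsProb μ)
    (Y : Ω → YT) (nd : Ω → NDT) (dc : Ω → DCT)
    (X : Ω → XT)
    (φ : XT → ZT) (Z : Ω → ZT) (hZ : ∀ ω, Z ω = φ (X ω))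
    (lam : ℝ) (hlam : 0 ≤ lam) :
    mutualInfo μ Z Y - lam * mutualInfo μ Z X ≤
      mutualInfo μ Z (fun ω => (Y ω, nd ω)) -
        lam * mutualInfo μ Z (fun ω => (nd ω, dc ω)) := by
  obtain ⟨hμ0, -⟩ := hμ
  have hY : mutualInfo μ Z Y ≤ mutualInfo μ Z (fun ω => (Y ω, nd ω)) :=
    mutualInfo_le_mutualInfo_pair hμ0 Z Y nd
  have hZX : mutualInfo μ Z X = entropy μ Z := by
    rw [funext hZ]
    exact mutualInfo_comp_left_self μ X φ
  have hX : mutualInfo μ Z (fun ω => (nd ω, dc ω)) ≤ mutualInfo μ Z X :=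
    (mutualInfo_le_entropy_left hμ0 Z _).trans_eq hZX.symm
  linarith [mul_le_mul_of_nonneg_left hX hlam]

/-- in the SCM with `X = h(pa, nd, dc)` (`h` injective) and
`Z = φ(X)`, for every `λ ≥ 0`,
`I(Z; (Y, nd)) − λ·I(Z; (nd, dc)) ≥ I(Z; Y) − λ·I(Z; X)`. -/
theorem stmt_6 {Ω A E1 E2 E3 YT NDT DCT XT ZT : Type}
    [Fintype Ω] [Fintype A] [Fintype E1] [Fintype E2] [Fintype E3]
    [Fintype YT] [Fintype NDT] [Fintype DCT] [Fintype XT] [Fintype ZT]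
    [DecidableEq A] [DecidableEq E1] [DecidableEq E2] [DecidableEq E3]
    [DecidableEq YT] [DecidableEq NDT] [DecidableEq DCT]
    [DecidableEq XT] [DecidableEq ZT]
    (μ : Ω → ℝ) (hμ : IsProb μ)
    (pa : Ω → A) (ε1 : Ω → E1) (ε2 : Ω → E2) (ε3 : Ω → E3)
    (g1 : A → E1 → YT) (g2 : A → E2 → NDT) (g3 : YT → E3 → DCT)
    (Y : Ω → YT) (nd : Ω → NDT) (dc : Ω → DCT)
    (hY : ∀ ω, Y ω = g1 (pa ω) (ε1 ω))
    (hnd : ∀ ω, nd ω = g2 (pa ω) (ε2 ω))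
    (hdc : ∀ ω, dc ω = g3 (Y ω) (ε3 ω))
    (h1 : IndepRV μ ε1 pa)
    (h2 : IndepRV μ ε2 (fun ω => (pa ω, ε1 ω)))
    (h3 : IndepRV μ ε3 (fun ω => (pa ω, ε1 ω, ε2 ω)))
    (h : A × NDT × DCT → XT) (hinj : Function.Injective h)
    (X : Ω → XT) (hX : ∀ ω, X ω = h (pa ω, nd ω, dc ω))
    (φ : XT → ZT) (Z : Ω → ZT) (hZ : ∀ ω, Z ω = φ (X ω))
    (lam : ℝ) (hlam : 0 ≤ lam) :
    mutualInfo μ Z Y - lam * mutualInfo μ Z X ≤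
      mutualInfo μ Z (fun ω => (Y ω, nd ω)) -
        lam * mutualInfo μ Z (fun ω => (nd ω, dc ω)) :=
  stmt_6_general μ hμ Y nd dc X φ Z hZ lam hlam
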